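/- For every finitely generated group G and every integer r ≥ 1, if every homomorphism from G to GL_r(F) is trivial for all finite fields F, and G admits a homomorphism ρ: G → GL_r(A) into the invertible matrices over a reduced commutative ring A finitely generated as a ℤ-algebra, then ρ is trivial. -/

import Mathlib

/-!
Reducing `ρ` modulo a maximal ideal `m` of `A` gives a representation over the residue field
`A ⧸ m`, a field finitely generated as a ring, hence finite by Zariski's lemma over the Jacobson
ring `ℤ`. By hypothesis these reductions are trivial, so the entries of `ρ g - 1` lie in every
maximal ideal. Since `A` is Jacobson, the intersection of its maximal ideals is the nilradical,
which vanishes because `A` is reduced.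
-/

open Matrix

theorem isJacobsonRing_of_jacobson_bot_eq_bot {R : Type*} [CommRing R] [IsDomain R]
    [IsPrincipalIdealRing R] (h : (⊥ : Ideal R).jacobson = ⊥) : IsJacobsonRing R := by
  rw [isJacobsonRing_iff_prime_eq]
  intro P hP
  rcases eq_or_ne P ⊥ with rfl | hP₀
  · exact h
  · have := IsPrime.to_maximal_ideal hP₀
    exact Ideal.jacobson_eq_self_of_isMaximal

-- Take `y = x` in `mem_jacobson_bot`: `x * x + 1` is a unit of `ℤ` only for `x = 0`.
theorem Int.jacobson_bot : (⊥ : Ideal ℤ).jacobson = ⊥ := by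
  refine eq_bot_iff.2 fun x hx => ?_
  rcases Int.isUnit_iff.1 (Ideal.mem_jacobson_bot.1 hx x) with h | h
  · simpa using h
  · nlinarith

instance Int.isJacobsonRing : IsJacobsonRing ℤ :=
  isJacobsonRing_of_jacobson_bot_eq_bot Int.jacobson_bot

-- `K` is integral over `ℤ` and `ℤ` is not a field, so `ℤ → K` has a nonzero kernel and the
-- finitely generated abelian group `K` is torsion.
theorem finite_of_finiteType_int (K : Type*) [Field K] [Algebra ℤ K] [Algebra.FiniteType ℤ K] :
    Finite K := by
  obtain rfl : ‹Algebra ℤ K› = Ring.toIntAlgebra K := Subsingleton.elim _ _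
  have := finite_of_finite_type_of_isJacobsonRing ℤ K
  obtain ⟨n, hn, hn₀⟩ : ∃ n : ℤ, algebraMap ℤ K n = 0 ∧ n ≠ 0 := by
    by_contra! h
    exact Int.not_isField <| isField_of_isIntegral_of_isField
      ((injective_iff_map_eq_zero _).2 h) (Field.toIsField K)
  refine Module.finite_of_fg_torsion K fun x => ⟨⟨n, mem_nonZeroDivisors_of_ne_zero hn₀⟩, ?_⟩
  change n • x = 0
  rw [zsmul_eq_mul, ← eq_intCast (algebraMap ℤ K), hn, zero_mul]

theorem Ideal.finite_quotient_of_finiteType_int {A : Type*} [CommRing A] [Algebra ℤ A]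
    [Algebra.FiniteType ℤ A] (m : Ideal A) [m.IsMaximal] : Finite (A ⧸ m) :=
  let := Ideal.Quotient.field m
  finite_of_finiteType_int (A ⧸ m)

theorem IsJacobsonRing.eq_of_forall_isMaximal_mk_eq {A : Type*} [CommRing A] [IsJacobsonRing A]
    [IsReduced A] {a b : A}
    (h : ∀ m : Ideal A, m.IsMaximal → Ideal.Quotient.mk m a = Ideal.Quotient.mk m b) :
    a = b := by
  have hmem : a - b ∈ (⊥ : Ideal A).jacobson :=
    Ideal.mem_sInf.2 fun m hm => Ideal.Quotient.eq.1 (h m hm.2)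
  rw [IsJacobsonRing.out ‹_› Ideal.isRadical_bot, Ideal.mem_bot] at hmem
  exact sub_eq_zero.1 hmem

theorem Matrix.GeneralLinearGroup.eq_one_of_forall_isMaximal_map_eq_one {n A : Type*}
    [Fintype n] [DecidableEq n] [CommRing A] [IsJacobsonRing A] [IsReduced A] {g : GL n A}
    (h : ∀ m : Ideal A, m.IsMaximal → GeneralLinearGroup.map (Ideal.Quotient.mk m) g = 1) :
    g = 1 := by
  refine Units.ext <| Matrix.ext fun i j =>
    IsJacobsonRing.eq_of_forall_isMaximal_mk_eq fun m hm => ?_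
  have := congrArg (fun u : GL n (A ⧸ m) => (u : Matrix n n (A ⧸ m)) i j) (h m hm)
  simpa [Matrix.one_apply, apply_ite (Ideal.Quotient.mk m)] using this

theorem stmt_15_general (G : Type) [Group G] (r : ℕ)
    (hfin : ∀ (F : Type) [Field F] [Finite F] (f : G →* GL (Fin r) F) (g : G),
      f g = 1)
    (A : Type) [CommRing A] [IsReduced A] [Algebra ℤ A]
    (hfg : Algebra.FiniteType ℤ A) (ρ : G →* GL (Fin r) A) :
    ∀ g : G, ρ g = 1 := by
  have : IsJacobsonRing A := isJacobsonRing_of_finiteType (A := ℤ)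
  intro g
  refine GeneralLinearGroup.eq_one_of_forall_isMaximal_map_eq_one fun m hm => ?_
  let := Ideal.Quotient.field m
  have := Ideal.finite_quotient_of_finiteType_int m
  exact hfin (A ⧸ m) ((GeneralLinearGroup.map (Ideal.Quotient.mk m)).comp ρ) g

/-- If all representations of the finitely generated group `G` into `GL r F`
over finite fields are trivial, then so is any representation into `GL r A`
for `A` a reduced finitely generated ℤ-algebra. -/
theorem stmt_15 (G : Type) [Group G] [Group.FG G] (r : ℕ) (hr : 1 ≤ r)
    (hfin : ∀ (F : Type) [Field F] [Finite F] (f : G →* GL (Fin r) F) (g : G),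
      f g = 1)
    (A : Type) [CommRing A] [IsReduced A] [Algebra ℤ A]
    (hfg : Algebra.FiniteType ℤ A) (ρ : G →* GL (Fin r) A) :
    ∀ g : G, ρ g = 1 :=
  stmt_15_general G r hfin A hfg ρ
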